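/- Let α ∈ (1/2, 1), 1/2 ≥ s > (1−α)/2, and ε > 0 small. Then sup over n ∈ ℤ of the sum over integers k, j with 0 < |j| ≤ |k|, |k| ≥ 2|n|, and |kj| ≥ |n|^{2−2α} of ⟨n⟩^{2s} |k|^{2(1−α)} / (⟨n+j⟩^{2s} ⟨n+k+j⟩^{2s} ⟨n+k⟩^{2s} |kj|^{1−ε}) is finite. -/
import Mathlib


open Real

/-- Japanese bracket of an integer. -/
noncomputable def jb (m : ℤ) : ℝ := Real.sqrt (1 + (m : ℝ) ^ 2)


lemma jb_pos (m : ℤ) : 0 < jb m := Real.sqrt_pos.2 (by positivity)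

lemma one_le_jb (m : ℤ) : 1 ≤ jb m := by
  have := Real.sqrt_le_sqrt (show (1:ℝ) ≤ 1+(m:ℝ)^2 by nlinarith [sq_nonneg (m:ℝ)])
  simpa [jb] using this

lemma abs_le_jb (m : ℤ) : |(m:ℝ)| ≤ jb m := by
  rw [jb, ← Real.sqrt_sq_eq_abs]
  exact Real.sqrt_le_sqrt (by nlinarith)

lemma jb_mono {m n : ℤ} (h : |(m:ℝ)| ≤ |(n:ℝ)|) : jb m ≤ jb n := by
  apply Real.sqrt_le_sqrt
  have := abs_le_abs_of_nonneg (abs_nonneg _) h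
  nlinarith [sq_abs (m:ℝ), sq_abs (n:ℝ), abs_nonneg (m:ℝ), abs_nonneg (n:ℝ)]

lemma jb_lip (n j : ℤ) : jb n ≤ jb (n + j) + |(j:ℝ)| := by
  have h1 : 0 < jb (n+j) := jb_pos _
  have h2 : |((n:ℝ)+j)| ≤ jb (n+j) := by
    have := abs_le_jb (n+j); push_cast at this; exact this
  have h3 : (1:ℝ) + (n:ℝ)^2 ≤ (jb (n+j) + |(j:ℝ)|)^2 := by
    have hsq : (jb (n+j))^2 = 1 + ((n:ℝ)+j)^2 := by
      rw [jb]; push_cast; rw [Real.sq_sqrt (by positivity)]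
    nlinarith [abs_nonneg ((n:ℝ)+j), abs_nonneg (j:ℝ), le_abs_self ((n:ℝ)+j),
      neg_abs_le ((n:ℝ)+j), le_abs_self (j:ℝ), neg_abs_le (j:ℝ)]
  calc jb n ≤ Real.sqrt ((jb (n+j) + |(j:ℝ)|)^2) := Real.sqrt_le_sqrt h3
  _ = jb (n+j) + |(j:ℝ)| := Real.sqrt_sq (by positivity)

/-- two-factor inverse-power trick -/
lemma pt_trick {x y a b : ℝ} (hx : 0 < x) (hy : 0 < y) (ha : 0 ≤ a) (hb : 0 ≤ b) :
    x ^ (-a) * y ^ (-b) ≤ x ^ (-(a+b)) + y ^ (-(a+b)) := by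
  rcases le_total x y with h | h
  · have h1 : y ^ (-b) ≤ x ^ (-b) := Real.rpow_le_rpow_of_nonpos hx h (by linarith)
    calc x ^ (-a) * y ^ (-b) ≤ x ^ (-a) * x ^ (-b) :=
          mul_le_mul_of_nonneg_left h1 (Real.rpow_nonneg hx.le _)
    _ = x ^ (-(a+b)) := by rw [← Real.rpow_add hx]; ring_nf
    _ ≤ _ := le_add_of_nonneg_right (Real.rpow_nonneg hy.le _)
  · have h1 : x ^ (-a) ≤ y ^ (-a) := Real.rpow_le_rpow_of_nonpos hy h (by linarith)
    calc x ^ (-a) * y ^ (-b) ≤ y ^ (-a) * y ^ (-b) :=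
          mul_le_mul_of_nonneg_right h1 (Real.rpow_nonneg hy.le _)
    _ = y ^ (-(a+b)) := by rw [← Real.rpow_add hy]; ring_nf
    _ ≤ _ := le_add_of_nonneg_left (Real.rpow_nonneg hx.le _)

lemma rpow_div_le {K c X t : ℝ} (hK : 0 ≤ K) (hc : 1 ≤ c) (ht0 : 0 ≤ t) (ht1 : t ≤ 1)
    (hX : 0 ≤ X) (h : K/c ≤ X) : K^t/c ≤ X^t := by
  have hc0 : 0 < c := lt_of_lt_of_le one_pos hc
  have hct0 : 0 < c^t := Real.rpow_pos_of_pos hc0 t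
  have h1 : c^t ≤ c := by
    calc c^t ≤ c^(1:ℝ) := Real.rpow_le_rpow_of_exponent_le hc ht1
    _ = c := Real.rpow_one c
  have h2 : K^t/c ≤ K^t/c^t := by
    rw [div_le_div_iff₀ hc0 hct0]
    exact mul_le_mul_of_nonneg_left h1 (Real.rpow_nonneg hK t)
  calc K^t/c ≤ K^t/c^t := h2
  _ = (K/c)^t := (Real.div_rpow hK hc0.le t).symm
  _ ≤ X^t := Real.rpow_le_rpow (by positivity) h ht0

/-- key pointwise lemma replacing the convolution estimate -/
lemma KP {N A B t ε : ℝ} (hA : 1 ≤ A) (hB : 1 ≤ B) (hN : 0 ≤ N) (hNAB : N ≤ A + B)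
    (hε : 0 ≤ ε) (htε : 2*ε ≤ t) (ht1 : t ≤ 1) :
    N ^ (t - 2*ε) * (A ^ (-(1-ε)) * B ^ (-t)) ≤ 2 * (A ^ (-(1+ε)) + B ^ (-(1+ε))) := by
  have hA0 : 0 < A := lt_of_lt_of_le one_pos hA
  have hB0 : 0 < B := lt_of_lt_of_le one_pos hB
  have hτ0 : 0 ≤ t - 2*ε := by linarith
  have hτ1 : t - 2*ε ≤ 1 := by linarith
  have h2τ : (2:ℝ) ^ (t-2*ε) ≤ 2 := by
    calc (2:ℝ)^(t-2*ε) ≤ (2:ℝ)^(1:ℝ) := Real.rpow_le_rpow_of_exponent_le one_le_two hτ1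
    _ = 2 := Real.rpow_one 2
  rcases le_total A B with h | h
  · have hN2 : N ≤ 2*B := by linarith
    have h1 : N^(t-2*ε) ≤ 2 * B^(t-2*ε) := by
      calc N^(t-2*ε) ≤ (2*B)^(t-2*ε) := Real.rpow_le_rpow hN hN2 hτ0
      _ = 2^(t-2*ε) * B^(t-2*ε) := Real.mul_rpow (by norm_num) hB0.le
      _ ≤ 2 * B^(t-2*ε) := mul_le_mul_of_nonneg_right h2τ (Real.rpow_nonneg hB0.le _)
    have h3 : B ^ (-(2*ε)) ≤ A ^ (-(2*ε)) := Real.rpow_le_rpow_of_nonpos hA0 h (by linarith)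
    calc N ^ (t-2*ε) * (A ^ (-(1-ε)) * B ^ (-t))
        ≤ (2 * B^(t-2*ε)) * (A ^ (-(1-ε)) * B ^ (-t)) := by
          apply mul_le_mul_of_nonneg_right h1
          positivity
    _ = 2 * (A ^ (-(1-ε)) * (B^(t-2*ε) * B^(-t))) := by ring
    _ = 2 * (A ^ (-(1-ε)) * B ^ (-(2*ε))) := by
          rw [← Real.rpow_add hB0, show t-2*ε + -t = -(2*ε) by ring]
    _ ≤ 2 * (A ^ (-(1-ε)) * A ^ (-(2*ε))) := by
          have := mul_le_mul_of_nonneg_left h3 (Real.rpow_nonneg hA0.le (-(1-ε)))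
          linarith
    _ = 2 * A ^ (-(1+ε)) := by
          rw [← Real.rpow_add hA0, show -(1-ε) + -(2*ε) = -(1+ε) by ring]
    _ ≤ 2 * (A ^ (-(1+ε)) + B ^ (-(1+ε))) := by
          have := Real.rpow_nonneg hB0.le (-(1+ε)); linarith
  · have hN2 : N ≤ 2*A := by linarith
    have h1 : N^(t-2*ε) ≤ 2 * A^(t-2*ε) := by
      calc N^(t-2*ε) ≤ (2*A)^(t-2*ε) := Real.rpow_le_rpow hN hN2 hτ0
      _ = 2^(t-2*ε) * A^(t-2*ε) := Real.mul_rpow (by norm_num) hA0.le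
      _ ≤ 2 * A^(t-2*ε) := mul_le_mul_of_nonneg_right h2τ (Real.rpow_nonneg hA0.le _)
    have h3 : A ^ (t-1-ε) ≤ B ^ (t-1-ε) := Real.rpow_le_rpow_of_nonpos hB0 h (by linarith)
    calc N ^ (t-2*ε) * (A ^ (-(1-ε)) * B ^ (-t))
        ≤ (2 * A^(t-2*ε)) * (A ^ (-(1-ε)) * B ^ (-t)) := by
          apply mul_le_mul_of_nonneg_right h1
          positivity
    _ = 2 * ((A^(t-2*ε) * A^(-(1-ε))) * B^(-t)) := by ring
    _ = 2 * (A ^ (t-1-ε) * B^(-t)) := by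
          rw [← Real.rpow_add hA0, show t-2*ε + -(1-ε) = t-1-ε by ring]
    _ ≤ 2 * (B ^ (t-1-ε) * B^(-t)) := by
          have := mul_le_mul_of_nonneg_right h3 (Real.rpow_nonneg hB0.le (-t))
          linarith
    _ = 2 * B ^ (-(1+ε)) := by
          rw [← Real.rpow_add hB0, show t-1-ε + -t = -(1+ε) by ring]
    _ ≤ 2 * (A ^ (-(1+ε)) + B ^ (-(1+ε))) := by
          have := Real.rpow_nonneg hA0.le (-(1+ε)); linarith

lemma abs_lower (x y : ℝ) : |x| - |y| ≤ |x + y| := by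
  have h := abs_add_le (x + y) (-y)
  rw [abs_neg] at h
  simp only [add_neg_cancel_right] at h
  linarith

set_option maxHeartbeats 2000000 in
lemma main_pt (α s ε : ℝ) (hα : 1 / 2 < α) (hα1 : α < 1) (hs : (1 - α) / 2 < s) (hs2 : s ≤ 1 / 2)
    (hε : 0 < ε) (hεs : ε < s)
    (n k j : ℤ) (h1 : 0 < |j|) (h2 : |j| ≤ |k|) (h3 : 2 * |n| ≤ |k|) :
    jb n ^ (2 * s) * (|k| : ℝ) ^ (2 * (1 - α)) /
      (jb (n + j) ^ (2 * s) * jb (n + k + j) ^ (2 * s) * jb (n + k) ^ (2 * s)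
        * (|k * j| : ℝ) ^ (1 - ε))
    ≤ 1024 * ((|k| : ℝ) ^ (-(4*s+2*α-1-3*ε)) *
        ((|j| : ℝ) ^ (-(1+ε)) + jb (n + j) ^ (-(1+ε)) + jb (n + k + j) ^ (-(1+ε)))) := by
  have hs0 : 0 < s := by linarith
  have ht0 : (0:ℝ) ≤ 2*s := by linarith
  have ht1 : 2*s ≤ 1 := by linarith
  -- basic quantities
  have hjk : (1:ℤ) ≤ |k| := le_trans h1 h2
  have hK1 : (1:ℝ) ≤ (|k| : ℝ) := by exact_mod_cast hjk
  have hK0 : (0:ℝ) < (|k| : ℝ) := lt_of_lt_of_le one_pos hK1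
  have hA1 : (1:ℝ) ≤ (|j| : ℝ) := by exact_mod_cast h1
  have hA0 : (0:ℝ) < (|j| : ℝ) := lt_of_lt_of_le one_pos hA1
  have hAK : (|j| : ℝ) ≤ (|k| : ℝ) := by exact_mod_cast h2
  have hnr : 2 * |(n:ℝ)| ≤ (|k| : ℝ) := by
    have : ((2 * |n| : ℤ) : ℝ) ≤ ((|k| : ℤ) : ℝ) := by exact_mod_cast h3
    push_cast at this; linarith
  have hB0 : 0 < jb (n+j) := jb_pos _
  have hB1 : 1 ≤ jb (n+j) := one_le_jb _
  have hC0 : 0 < jb (n+k+j) := jb_pos _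
  have hNK0 : 0 < jb (n+k) := jb_pos _
  have hNn0 : 0 < jb n := jb_pos _
  -- abs inequalities
  have ank : |(n:ℝ) + (k:ℝ)| ≤ jb (n+k) := by
    have := abs_le_jb (n+k); push_cast at this; exact this
  have ankj : |(n:ℝ) + (k:ℝ) + (j:ℝ)| ≤ jb (n+k+j) := by
    have := abs_le_jb (n+k+j); push_cast at this; exact this
  have anj : |(n:ℝ) + (j:ℝ)| ≤ jb (n+j) := by
    have := abs_le_jb (n+j); push_cast at this; exact this
  have a3 : (|k| : ℝ) ≤ |(n:ℝ) + (k:ℝ)| + |(n:ℝ)| := by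
    calc |(k:ℝ)| = |((n:ℝ) + (k:ℝ)) + -(n:ℝ)| := by congr 1; ring
    _ ≤ |(n:ℝ) + (k:ℝ)| + |(-(n:ℝ))| := abs_add_le _ _
    _ = |(n:ℝ) + (k:ℝ)| + |(n:ℝ)| := by rw [abs_neg]
  have hNK_half : (|k| : ℝ)/2 ≤ jb (n+k) := by
    have : (|k| : ℝ) - |(n:ℝ)| ≤ |(n:ℝ) + (k:ℝ)| := by linarith [a3]
    linarith [ank, abs_nonneg (n:ℝ), hnr, this]
  have hNn_le_NK : jb n ≤ jb (n+k) := by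
    apply jb_mono
    have : ((n + k : ℤ) : ℝ) = (n:ℝ) + (k:ℝ) := by push_cast; ring
    rw [this]
    have h4 : (|k| : ℝ) - |(n:ℝ)| ≤ |(n:ℝ) + (k:ℝ)| := by linarith [a3]
    linarith [hnr]
  have hNn_le_K : jb n ≤ (|k| : ℝ) := by
    have e1 : (1:ℝ) ≤ (|k| : ℝ)^2 := by nlinarith
    have e2 : 4*(n:ℝ)^2 ≤ (|k| : ℝ)^2 := by
      nlinarith [abs_nonneg (n:ℝ), sq_abs (n:ℝ)]
    have : (1:ℝ) + (n:ℝ)^2 ≤ (|k| : ℝ)^2 := by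
      rcases eq_or_ne n 0 with hn0 | hn0
      · subst hn0; norm_num at e1 ⊢; linarith
      · have hn1 : (1:ℤ) ≤ |n| := Int.one_le_abs hn0
        have hn1r : (1:ℝ) ≤ |(n:ℝ)| := by exact_mod_cast hn1
        have : (1:ℝ) ≤ (n:ℝ)^2 := by nlinarith [sq_abs (n:ℝ)]
        linarith
    calc jb n ≤ Real.sqrt ((|k| : ℝ)^2) := Real.sqrt_le_sqrt this
    _ = (|k| : ℝ) := Real.sqrt_sq hK0.le
  -- rewrite |k*j|
  rw [show |(k:ℝ) * (j:ℝ)| = |(k:ℝ)| * |(j:ℝ)| from abs_mul _ _,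
    Real.mul_rpow (abs_nonneg _) (abs_nonneg _)]
  have hD : 0 < jb (n+j) ^ (2*s) * jb (n+k+j) ^ (2*s) * jb (n+k) ^ (2*s)
      * ((|k| : ℝ) ^ (1-ε) * (|j| : ℝ) ^ (1-ε)) := by
    apply mul_pos (mul_pos (mul_pos _ _) _) (mul_pos _ _) <;>
      exact Real.rpow_pos_of_pos (by assumption) _
  rw [div_le_iff₀ hD]
  -- common cancellation identities
  have cancelA : (|j| : ℝ) ^ (-(1-ε)) * (|j| : ℝ) ^ (1-ε) = 1 := by
    rw [← Real.rpow_add hA0]; simp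
  have cancelB : jb (n+j) ^ (-(2*s)) * jb (n+j) ^ (2*s) = 1 := by
    rw [← Real.rpow_add hB0]; simp
  have cancelC : jb (n+k+j) ^ (-(2*s)) * jb (n+k+j) ^ (2*s) = 1 := by
    rw [← Real.rpow_add hC0]; simp
  have hNKt : (|k| : ℝ)^(2*s)/2 ≤ jb (n+k) ^ (2*s) :=
    rpow_div_le hK0.le one_le_two ht0 ht1 hNK0.le hNK_half
  rcases le_or_gt ((|k| : ℝ)/4) (jb (n+k+j)) with hC4 | hC4
  · -- CASE I
    have hCt : (|k| : ℝ)^(2*s)/4 ≤ jb (n+k+j) ^ (2*s) :=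
      rpow_div_le hK0.le (by norm_num) ht0 ht1 hC0.le hC4
    have hNAB : jb n ≤ (|j| : ℝ) + jb (n+j) := by
      have := jb_lip n j; linarith
    have hKP := KP hA1 hB1 hNn0.le hNAB hε.le (by linarith) ht1
    have split : jb n ^ (2*s) = jb n ^ (2*s-2*ε) * jb n ^ (2*ε) := by
      rw [← Real.rpow_add hNn0]; congr 1; ring
    have hNn2ε : jb n ^ (2*ε) ≤ (|k| : ℝ) ^ (2*ε) :=
      Real.rpow_le_rpow hNn0.le hNn_le_K (by linarith)
    have step1 : jb n ^ (2*s) * (|k| : ℝ) ^ (2*(1-α)) ≤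
        8 * ((|k| : ℝ) ^ (-(4*s+2*α-1-3*ε)) *
          (jb n ^ (2*s-2*ε) * ((|j| : ℝ) ^ (-(1-ε)) * jb (n+j) ^ (-(2*s)))))
        * (jb (n+j) ^ (2*s) * jb (n+k+j) ^ (2*s) * jb (n+k) ^ (2*s)
            * ((|k| : ℝ) ^ (1-ε) * (|j| : ℝ) ^ (1-ε))) := by
      have RHSeq : 8 * ((|k| : ℝ) ^ (-(4*s+2*α-1-3*ε)) *
          (jb n ^ (2*s-2*ε) * ((|j| : ℝ) ^ (-(1-ε)) * jb (n+j) ^ (-(2*s)))))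
          * (jb (n+j) ^ (2*s) * jb (n+k+j) ^ (2*s) * jb (n+k) ^ (2*s)
            * ((|k| : ℝ) ^ (1-ε) * (|j| : ℝ) ^ (1-ε)))
          = 8 * (((|j| : ℝ) ^ (-(1-ε)) * (|j| : ℝ) ^ (1-ε)) *
              ((jb (n+j) ^ (-(2*s)) * jb (n+j) ^ (2*s)) *
              (((|k| : ℝ) ^ (-(4*s+2*α-1-3*ε)) * (|k| : ℝ) ^ (1-ε)) *
                (jb n ^ (2*s-2*ε) * (jb (n+k+j) ^ (2*s) * jb (n+k) ^ (2*s)))))) := by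
        ring
      rw [RHSeq, cancelA, cancelB]
      have combineK : (|k| : ℝ) ^ (-(4*s+2*α-1-3*ε)) * (|k| : ℝ) ^ (1-ε)
          = (|k| : ℝ) ^ ((1-ε)-(4*s+2*α-1-3*ε)) := by
        rw [← Real.rpow_add hK0]; congr 1; ring
      rw [combineK]
      simp only [one_mul]
      -- goal : Nn^(2s)*K^γ ≤ 8*(K^e * (Nn^τ * (C^t*NK^t)))  with e = (1-ε)-κ
      have hprod : ((|k| : ℝ)^(2*s)/4) * ((|k| : ℝ)^(2*s)/2)
          ≤ jb (n+k+j) ^ (2*s) * jb (n+k) ^ (2*s) :=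
        mul_le_mul hCt hNKt (by positivity) (Real.rpow_nonneg hC0.le _)
      have eK : (|k| : ℝ) ^ (2*(1-α)) * (|k| : ℝ) ^ (2*ε)
          = 8 * ((|k| : ℝ) ^ ((1-ε)-(4*s+2*α-1-3*ε)) * (((|k| : ℝ)^(2*s)/4) * ((|k| : ℝ)^(2*s)/2))) := by
        rw [← Real.rpow_add hK0]
        rw [show 8 * ((|k| : ℝ) ^ ((1-ε)-(4*s+2*α-1-3*ε)) * (((|k| : ℝ)^(2*s)/4) * ((|k| : ℝ)^(2*s)/2)))
            = (|k| : ℝ) ^ ((1-ε)-(4*s+2*α-1-3*ε)) * ((|k| : ℝ)^(2*s) * (|k| : ℝ)^(2*s)) from by ring]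
        rw [← Real.rpow_add hK0, ← Real.rpow_add hK0]
        congr 1; ring
      calc jb n ^ (2*s) * (|k| : ℝ) ^ (2*(1-α))
          = jb n ^ (2*s-2*ε) * jb n ^ (2*ε) * (|k| : ℝ) ^ (2*(1-α)) := by rw [← split]
      _ ≤ jb n ^ (2*s-2*ε) * (|k| : ℝ) ^ (2*ε) * (|k| : ℝ) ^ (2*(1-α)) := by
          exact mul_le_mul_of_nonneg_right
            (mul_le_mul_of_nonneg_left hNn2ε (Real.rpow_nonneg hNn0.le _))
            (Real.rpow_nonneg hK0.le _)
      _ = jb n ^ (2*s-2*ε) * ((|k| : ℝ) ^ (2*(1-α)) * (|k| : ℝ) ^ (2*ε)) := by ring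
      _ = jb n ^ (2*s-2*ε) * (8 * ((|k| : ℝ) ^ ((1-ε)-(4*s+2*α-1-3*ε)) *
            (((|k| : ℝ)^(2*s)/4) * ((|k| : ℝ)^(2*s)/2)))) := by rw [eK]
      _ ≤ 8 * ((|k| : ℝ) ^ ((1-ε)-(4*s+2*α-1-3*ε)) *
            (jb n ^ (2*s-2*ε) * (jb (n+k+j) ^ (2*s) * jb (n+k) ^ (2*s)))) := by
          have hKe : (0:ℝ) ≤ (|k| : ℝ) ^ ((1-ε)-(4*s+2*α-1-3*ε)) := Real.rpow_nonneg hK0.le _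
          have hNnτ : (0:ℝ) ≤ jb n ^ (2*s-2*ε) := Real.rpow_nonneg hNn0.le _
          nlinarith [mul_le_mul_of_nonneg_left hprod (mul_nonneg hKe hNnτ)]
    calc jb n ^ (2*s) * (|k| : ℝ) ^ (2*(1-α)) ≤ _ := step1
    _ ≤ 1024 * ((|k| : ℝ) ^ (-(4*s+2*α-1-3*ε)) *
          ((|j| : ℝ) ^ (-(1+ε)) + jb (n+j) ^ (-(1+ε)) + jb (n+k+j) ^ (-(1+ε))))
        * (jb (n+j) ^ (2*s) * jb (n+k+j) ^ (2*s) * jb (n+k) ^ (2*s)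
            * ((|k| : ℝ) ^ (1-ε) * (|j| : ℝ) ^ (1-ε))) := by
        have hKκ : (0:ℝ) ≤ (|k| : ℝ) ^ (-(4*s+2*α-1-3*ε)) := Real.rpow_nonneg hK0.le _
        have hCρ : (0:ℝ) ≤ jb (n+k+j) ^ (-(1+ε)) := Real.rpow_nonneg hC0.le _
        have hmid : jb n ^ (2*s-2*ε) * ((|j| : ℝ) ^ (-(1-ε)) * jb (n+j) ^ (-(2*s)))
            ≤ 2 * ((|j| : ℝ) ^ (-(1+ε)) + jb (n+j) ^ (-(1+ε)) + jb (n+k+j) ^ (-(1+ε))) := by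
          calc jb n ^ (2*s-2*ε) * ((|j| : ℝ) ^ (-(1-ε)) * jb (n+j) ^ (-(2*s)))
              ≤ 2 * ((|j| : ℝ) ^ (-(1+ε)) + jb (n+j) ^ (-(1+ε))) := hKP
          _ ≤ _ := by linarith
        have h8 : 8 * ((|k| : ℝ) ^ (-(4*s+2*α-1-3*ε)) *
            (jb n ^ (2*s-2*ε) * ((|j| : ℝ) ^ (-(1-ε)) * jb (n+j) ^ (-(2*s)))))
            ≤ 1024 * ((|k| : ℝ) ^ (-(4*s+2*α-1-3*ε)) *
            ((|j| : ℝ) ^ (-(1+ε)) + jb (n+j) ^ (-(1+ε)) + jb (n+k+j) ^ (-(1+ε)))) := by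
          have := mul_le_mul_of_nonneg_left hmid hKκ
          have hsum0 : (0:ℝ) ≤ (|j| : ℝ) ^ (-(1+ε)) + jb (n+j) ^ (-(1+ε)) + jb (n+k+j) ^ (-(1+ε)) := by
            have := Real.rpow_nonneg hA0.le (-(1+ε))
            have := Real.rpow_nonneg hB0.le (-(1+ε))
            linarith
          nlinarith [mul_nonneg hKκ hsum0]
        exact mul_le_mul_of_nonneg_right h8 hD.le
  · -- CASE II
    have hCabs : |(n:ℝ) + (k:ℝ) + (j:ℝ)| < (|k| : ℝ)/4 := lt_of_le_of_lt ankj hC4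
    have a2 : |(n:ℝ) + (k:ℝ)| ≤ |(n:ℝ) + (k:ℝ) + (j:ℝ)| + |(j:ℝ)| := by
      calc |(n:ℝ) + (k:ℝ)| = |((n:ℝ) + (k:ℝ) + (j:ℝ)) + -(j:ℝ)| := by congr 1; ring
      _ ≤ |(n:ℝ) + (k:ℝ) + (j:ℝ)| + |(-(j:ℝ))| := abs_add_le _ _
      _ = _ := by rw [abs_neg]
    have a4 : (|k| : ℝ) ≤ |(n:ℝ) + (k:ℝ) + (j:ℝ)| + |(n:ℝ) + (j:ℝ)| := by
      calc |(k:ℝ)| = |((n:ℝ) + (k:ℝ) + (j:ℝ)) + -((n:ℝ) + (j:ℝ))| := by congr 1; ring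
      _ ≤ |(n:ℝ) + (k:ℝ) + (j:ℝ)| + |(-((n:ℝ) + (j:ℝ)))| := abs_add_le _ _
      _ = _ := by rw [abs_neg]
    have hA4 : (|k| : ℝ)/4 ≤ (|j| : ℝ) := by
      have h5 : (|k| : ℝ) - |(n:ℝ)| ≤ |(n:ℝ) + (k:ℝ)| := by linarith [a3]
      linarith [a2, hnr, hCabs]
    have hB4 : (|k| : ℝ)/4 ≤ jb (n+j) := by
      have : (|k| : ℝ) - (|k| : ℝ)/4 ≤ |(n:ℝ) + (j:ℝ)| := by linarith [a4, hCabs]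
      linarith [anj]
    have hAt : (|k| : ℝ)^(2*s-2*ε)/4 ≤ (|j| : ℝ) ^ (2*s-2*ε) :=
      rpow_div_le hK0.le (by norm_num) (by linarith) (by linarith) hA0.le hA4
    have hBt : (|k| : ℝ)^(2*s)/4 ≤ jb (n+j) ^ (2*s) :=
      rpow_div_le hK0.le (by norm_num) ht0 ht1 hB0.le hB4
    have hNnt : jb n ^ (2*s) ≤ (|k| : ℝ) ^ (2*s) :=
      Real.rpow_le_rpow hNn0.le hNn_le_K ht0
    have hptc : (|j| : ℝ) ^ (-(1+ε-2*s)) * jb (n+k+j) ^ (-(2*s))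
        ≤ (|j| : ℝ) ^ (-(1+ε)) + jb (n+k+j) ^ (-(1+ε)) := by
      have h := pt_trick hA0 hC0 (show (0:ℝ) ≤ 1+ε-2*s by linarith) ht0
      rw [show (1+ε-2*s) + 2*s = 1+ε from by ring] at h
      exact h
    have mergeA : (|j| : ℝ) ^ (-(1+ε-2*s)) * (|j| : ℝ) ^ (1-ε) = (|j| : ℝ) ^ (2*s-2*ε) := by
      rw [← Real.rpow_add hA0]; congr 1; ring
    have claim1 : jb n ^ (2*s) * (|k| : ℝ) ^ (2*(1-α)) ≤
        32 * ((|k| : ℝ) ^ (-(4*s+2*α-1-3*ε)) *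
          ((|j| : ℝ) ^ (-(1+ε-2*s)) * jb (n+k+j) ^ (-(2*s))))
        * (jb (n+j) ^ (2*s) * jb (n+k+j) ^ (2*s) * jb (n+k) ^ (2*s)
            * ((|k| : ℝ) ^ (1-ε) * (|j| : ℝ) ^ (1-ε))) := by
      have RHSeq : 32 * ((|k| : ℝ) ^ (-(4*s+2*α-1-3*ε)) *
          ((|j| : ℝ) ^ (-(1+ε-2*s)) * jb (n+k+j) ^ (-(2*s))))
          * (jb (n+j) ^ (2*s) * jb (n+k+j) ^ (2*s) * jb (n+k) ^ (2*s)
            * ((|k| : ℝ) ^ (1-ε) * (|j| : ℝ) ^ (1-ε)))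
          = 32 * ((jb (n+k+j) ^ (-(2*s)) * jb (n+k+j) ^ (2*s)) *
              (((|j| : ℝ) ^ (-(1+ε-2*s)) * (|j| : ℝ) ^ (1-ε)) *
              (((|k| : ℝ) ^ (-(4*s+2*α-1-3*ε)) * (|k| : ℝ) ^ (1-ε)) *
                (jb (n+j) ^ (2*s) * jb (n+k) ^ (2*s))))) := by ring
      rw [RHSeq, cancelC, mergeA]
      have combineK : (|k| : ℝ) ^ (-(4*s+2*α-1-3*ε)) * (|k| : ℝ) ^ (1-ε)
          = (|k| : ℝ) ^ ((1-ε)-(4*s+2*α-1-3*ε)) := by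
        rw [← Real.rpow_add hK0]; congr 1; ring
      rw [combineK]
      simp only [one_mul]
      -- goal: Nn^t*K^γ ≤ 32*(A^(2s-2ε) * (K^e * (B^t*NK^t)))
      have eK : (|k| : ℝ)^(2*s) * (|k| : ℝ) ^ (2*(1-α))
          = 32 * (((|k| : ℝ)^(2*s-2*ε)/4) * ((|k| : ℝ) ^ ((1-ε)-(4*s+2*α-1-3*ε)) *
              (((|k| : ℝ)^(2*s)/4) * ((|k| : ℝ)^(2*s)/2)))) := by
        rw [show 32 * (((|k| : ℝ)^(2*s-2*ε)/4) * ((|k| : ℝ) ^ ((1-ε)-(4*s+2*α-1-3*ε)) *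
              (((|k| : ℝ)^(2*s)/4) * ((|k| : ℝ)^(2*s)/2))))
            = (|k| : ℝ)^(2*s-2*ε) * ((|k| : ℝ) ^ ((1-ε)-(4*s+2*α-1-3*ε)) *
              ((|k| : ℝ)^(2*s) * (|k| : ℝ)^(2*s))) from by ring]
        rw [← Real.rpow_add hK0, ← Real.rpow_add hK0, ← Real.rpow_add hK0, ← Real.rpow_add hK0]
        congr 1; ring
      have hprod : (((|k| : ℝ)^(2*s-2*ε)/4) * (((|k| : ℝ)^(2*s)/4) * ((|k| : ℝ)^(2*s)/2)))
          ≤ (|j| : ℝ) ^ (2*s-2*ε) * (jb (n+j) ^ (2*s) * jb (n+k) ^ (2*s)) := by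
        apply mul_le_mul hAt _ (by positivity) (Real.rpow_nonneg hA0.le _)
        exact mul_le_mul hBt hNKt (by positivity) (Real.rpow_nonneg hB0.le _)
      calc jb n ^ (2*s) * (|k| : ℝ) ^ (2*(1-α))
          ≤ (|k| : ℝ)^(2*s) * (|k| : ℝ) ^ (2*(1-α)) := by
            exact mul_le_mul_of_nonneg_right hNnt (Real.rpow_nonneg hK0.le _)
      _ = 32 * (((|k| : ℝ)^(2*s-2*ε)/4) * ((|k| : ℝ) ^ ((1-ε)-(4*s+2*α-1-3*ε)) *
              (((|k| : ℝ)^(2*s)/4) * ((|k| : ℝ)^(2*s)/2)))) := eK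
      _ ≤ 32 * ((|j| : ℝ) ^ (2*s-2*ε) * ((|k| : ℝ) ^ ((1-ε)-(4*s+2*α-1-3*ε)) *
              (jb (n+j) ^ (2*s) * jb (n+k) ^ (2*s)))) := by
          have hKe : (0:ℝ) ≤ (|k| : ℝ) ^ ((1-ε)-(4*s+2*α-1-3*ε)) := Real.rpow_nonneg hK0.le _
          nlinarith [mul_le_mul_of_nonneg_left hprod hKe]
      _ = 32 * ((|j| : ℝ) ^ (2*s-2*ε) * ((|k| : ℝ) ^ ((1-ε)-(4*s+2*α-1-3*ε)) *
              (jb (n+j) ^ (2*s) * jb (n+k) ^ (2*s)))) := rfl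
    calc jb n ^ (2*s) * (|k| : ℝ) ^ (2*(1-α)) ≤ _ := claim1
    _ ≤ 1024 * ((|k| : ℝ) ^ (-(4*s+2*α-1-3*ε)) *
          ((|j| : ℝ) ^ (-(1+ε)) + jb (n+j) ^ (-(1+ε)) + jb (n+k+j) ^ (-(1+ε))))
        * (jb (n+j) ^ (2*s) * jb (n+k+j) ^ (2*s) * jb (n+k) ^ (2*s)
            * ((|k| : ℝ) ^ (1-ε) * (|j| : ℝ) ^ (1-ε))) := by
        have hKκ : (0:ℝ) ≤ (|k| : ℝ) ^ (-(4*s+2*α-1-3*ε)) := Real.rpow_nonneg hK0.le _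
        have hBρ : (0:ℝ) ≤ jb (n+j) ^ (-(1+ε)) := Real.rpow_nonneg hB0.le _
        have hmid : (|j| : ℝ) ^ (-(1+ε-2*s)) * jb (n+k+j) ^ (-(2*s))
            ≤ (|j| : ℝ) ^ (-(1+ε)) + jb (n+j) ^ (-(1+ε)) + jb (n+k+j) ^ (-(1+ε)) := by
          calc (|j| : ℝ) ^ (-(1+ε-2*s)) * jb (n+k+j) ^ (-(2*s))
              ≤ (|j| : ℝ) ^ (-(1+ε)) + jb (n+k+j) ^ (-(1+ε)) := hptc
          _ ≤ _ := by linarith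
        have h32 : 32 * ((|k| : ℝ) ^ (-(4*s+2*α-1-3*ε)) *
            ((|j| : ℝ) ^ (-(1+ε-2*s)) * jb (n+k+j) ^ (-(2*s))))
            ≤ 1024 * ((|k| : ℝ) ^ (-(4*s+2*α-1-3*ε)) *
            ((|j| : ℝ) ^ (-(1+ε)) + jb (n+j) ^ (-(1+ε)) + jb (n+k+j) ^ (-(1+ε)))) := by
          have hsum0 : (0:ℝ) ≤ (|j| : ℝ) ^ (-(1+ε)) + jb (n+j) ^ (-(1+ε)) + jb (n+k+j) ^ (-(1+ε)) := by
            have := Real.rpow_nonneg hA0.le (-(1+ε))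
            have := Real.rpow_nonneg hC0.le (-(1+ε))
            linarith
          nlinarith [mul_le_mul_of_nonneg_left hmid hKκ, mul_nonneg hKκ hsum0]
        exact mul_le_mul_of_nonneg_right h32 hD.le

/-- shift equivalence on ℤ -/
def shiftE (n : ℤ) : ℤ ≃ ℤ where
  toFun j := n + j
  invFun j := j - n
  left_inv j := by show n + j - n = j; omega
  right_inv j := by show n + (j - n) = j; omega

/-- shear equivalence on ℤ × ℤ -/
def shearE (n : ℤ) : ℤ × ℤ ≃ ℤ × ℤ where
  toFun p := (p.1, n + p.1 + p.2)
  invFun p := (p.1, p.2 - (n + p.1))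
  left_inv p := by obtain ⟨a, b⟩ := p; simp
  right_inv p := by obtain ⟨a, b⟩ := p; simp

set_option maxHeartbeats 2000000 in
/-- uniform bound in the region `|k| ≫ |n|` (interpreted as `|k| ≥ 2|n|`) for the
trilinear estimate, with the small loss `|kj|^{1-ε}`. Here `p.1 = k`, `p.2 = j`. -/
theorem stmt_15 (α s : ℝ) (hα : 1 / 2 < α) (hα1 : α < 1)
    (hs : (1 - α) / 2 < s) (hs2 : s ≤ 1 / 2) :
    ∃ ε₀ > 0, ∀ ε : ℝ, 0 < ε → ε < ε₀ → ∃ C : ℝ, ∀ n : ℤ,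
      (∑' p : ℤ × ℤ,
        if 0 < |p.2| ∧ |p.2| ≤ |p.1| ∧ 2 * |n| ≤ |p.1| ∧
            (|n| : ℝ) ^ (2 - 2 * α) ≤ (|p.1 * p.2| : ℝ) then
          jb n ^ (2 * s) * (|p.1| : ℝ) ^ (2 * (1 - α)) /
            (jb (n + p.2) ^ (2 * s) * jb (n + p.1 + p.2) ^ (2 * s) * jb (n + p.1) ^ (2 * s)
              * (|p.1 * p.2| : ℝ) ^ (1 - ε))
        else 0) ≤ C := by

  have hs0 : 0 < s := by linarith
  refine ⟨min s ((4*s+2*α-2)/3), lt_min hs0 (by linarith), ?_⟩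
  intro ε hε0 hεlt
  have hεs : ε < s := lt_of_lt_of_le hεlt (min_le_left _ _)
  have hεκ : 1 < 4*s+2*α-1-3*ε := by
    have := lt_of_lt_of_le hεlt (min_le_right _ _); linarith
  have hρ : 1 < 1+ε := by linarith
  -- summability of the building blocks
  have hu : Summable (fun i : ℤ => |(i:ℝ)| ^ (-(4*s+2*α-1-3*ε))) := summable_abs_int_rpow hεκ
  have hv : Summable (fun i : ℤ => |(i:ℝ)| ^ (-(1+ε))) := summable_abs_int_rpow hρ
  have hw : Summable (fun i : ℤ => jb i ^ (-(1+ε))) := by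
    apply Summable.of_nonneg_of_le (fun i => Real.rpow_nonneg (jb_pos i).le _)
      (f := fun i : ℤ => |(i:ℝ)| ^ (-(1+ε)) + if i = 0 then (1:ℝ) else 0)
      ?_ (hv.add ⟨1, hasSum_ite_eq 0 1⟩)
    intro i
    rcases eq_or_ne i 0 with h | h
    · subst h
      show jb 0 ^ (-(1+ε)) ≤ |((0:ℤ):ℝ)| ^ (-(1+ε)) + if (0:ℤ) = 0 then (1:ℝ) else 0
      rw [if_pos rfl, show jb 0 = 1 by simp [jb], Real.one_rpow,
        show |((0:ℤ):ℝ)| = 0 by simp, Real.zero_rpow (by linarith : -(1+ε) ≠ 0)]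
      norm_num
    · show jb i ^ (-(1+ε)) ≤ |(i:ℝ)| ^ (-(1+ε)) + if i = 0 then (1:ℝ) else 0
      rw [if_neg h, add_zero]
      have h0 : (0:ℝ) < |(i:ℝ)| := by
        rw [abs_pos]; exact_mod_cast h
      exact Real.rpow_le_rpow_of_nonpos h0 (abs_le_jb i) (by linarith)
  have hnnu : (0 : ℤ → ℝ) ≤ (fun i : ℤ => |(i:ℝ)| ^ (-(4*s+2*α-1-3*ε))) :=
    fun i => Real.rpow_nonneg (abs_nonneg _) _
  have hnnv : (0 : ℤ → ℝ) ≤ (fun i : ℤ => |(i:ℝ)| ^ (-(1+ε))) :=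
    fun i => Real.rpow_nonneg (abs_nonneg _) _
  have hnnw : (0 : ℤ → ℝ) ≤ (fun i : ℤ => jb i ^ (-(1+ε))) :=
    fun i => Real.rpow_nonneg (jb_pos i).le _
  refine ⟨1024 * ((∑' i : ℤ, |(i:ℝ)| ^ (-(4*s+2*α-1-3*ε))) * (∑' i : ℤ, |(i:ℝ)| ^ (-(1+ε)))
      + (∑' i : ℤ, |(i:ℝ)| ^ (-(4*s+2*α-1-3*ε))) * (∑' i : ℤ, jb i ^ (-(1+ε)))
      + (∑' i : ℤ, |(i:ℝ)| ^ (-(4*s+2*α-1-3*ε))) * (∑' i : ℤ, jb i ^ (-(1+ε)))), ?_⟩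
  intro n
  -- the majorant
  set G : ℤ × ℤ → ℝ := fun p => 1024 * (|(p.1:ℝ)| ^ (-(4*s+2*α-1-3*ε)) *
      (|(p.2:ℝ)| ^ (-(1+ε)) + jb (n + p.2) ^ (-(1+ε)) + jb (n + p.1 + p.2) ^ (-(1+ε)))) with hGdef
  have hg1 : Summable (fun p : ℤ × ℤ => |(p.1:ℝ)| ^ (-(4*s+2*α-1-3*ε)) * |(p.2:ℝ)| ^ (-(1+ε))) :=
    hu.mul_of_nonneg hv hnnu hnnv
  have hw' : Summable (fun i : ℤ => jb (n + i) ^ (-(1+ε))) :=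
    ((shiftE n).summable_iff (f := fun i : ℤ => jb i ^ (-(1+ε)))).2 hw
  have hg2 : Summable (fun p : ℤ × ℤ => |(p.1:ℝ)| ^ (-(4*s+2*α-1-3*ε)) * jb (n + p.2) ^ (-(1+ε))) :=
    hu.mul_of_nonneg hw' hnnu (fun i => Real.rpow_nonneg (jb_pos _).le _)
  have hF : Summable (fun p : ℤ × ℤ => |(p.1:ℝ)| ^ (-(4*s+2*α-1-3*ε)) * jb p.2 ^ (-(1+ε))) :=
    hu.mul_of_nonneg hw hnnu hnnw
  have hg3 : Summable (fun p : ℤ × ℤ =>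
      |(p.1:ℝ)| ^ (-(4*s+2*α-1-3*ε)) * jb (n + p.1 + p.2) ^ (-(1+ε))) := by
    have h := ((shearE n).summable_iff
      (f := fun p : ℤ × ℤ => |(p.1:ℝ)| ^ (-(4*s+2*α-1-3*ε)) * jb p.2 ^ (-(1+ε)))).2 hF
    exact h.congr (fun p => rfl)
  have hG : Summable G := by
    rw [hGdef]
    apply Summable.mul_left
    have h := (hg1.add hg2).add hg3
    exact h.congr (fun p => by ring)
  -- pointwise bound
  have key : ∀ p : ℤ × ℤ,
      (if 0 < |p.2| ∧ |p.2| ≤ |p.1| ∧ 2 * |n| ≤ |p.1| ∧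
            (|n| : ℝ) ^ (2 - 2 * α) ≤ (|p.1 * p.2| : ℝ) then
          jb n ^ (2 * s) * (|p.1| : ℝ) ^ (2 * (1 - α)) /
            (jb (n + p.2) ^ (2 * s) * jb (n + p.1 + p.2) ^ (2 * s) * jb (n + p.1) ^ (2 * s)
              * (|p.1 * p.2| : ℝ) ^ (1 - ε))
        else 0) ≤ G p := by
    intro p
    have hG0 : 0 ≤ G p := by
      rw [hGdef]
      apply mul_nonneg (by norm_num)
      apply mul_nonneg (Real.rpow_nonneg (abs_nonneg _) _)
      have h1 := Real.rpow_nonneg (abs_nonneg (p.2:ℝ)) (-(1+ε))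
      have h2 := Real.rpow_nonneg (jb_pos (n+p.2)).le (-(1+ε))
      have h3 := Real.rpow_nonneg (jb_pos (n+p.1+p.2)).le (-(1+ε))
      linarith
    split_ifs with hc
    · obtain ⟨hc1, hc2, hc3, -⟩ := hc
      exact main_pt α s ε hα hα1 hs hs2 hε0 hεs n p.1 p.2 hc1 hc2 hc3
    · exact hG0
  have hf0 : ∀ p : ℤ × ℤ,
      (0:ℝ) ≤ (if 0 < |p.2| ∧ |p.2| ≤ |p.1| ∧ 2 * |n| ≤ |p.1| ∧
            (|n| : ℝ) ^ (2 - 2 * α) ≤ (|p.1 * p.2| : ℝ) then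
          jb n ^ (2 * s) * (|p.1| : ℝ) ^ (2 * (1 - α)) /
            (jb (n + p.2) ^ (2 * s) * jb (n + p.1 + p.2) ^ (2 * s) * jb (n + p.1) ^ (2 * s)
              * (|p.1 * p.2| : ℝ) ^ (1 - ε))
        else 0) := by
    intro p
    split_ifs with hc
    · apply div_nonneg
      · exact mul_nonneg (Real.rpow_nonneg (jb_pos n).le _) (Real.rpow_nonneg (abs_nonneg _) _)
      · exact mul_nonneg (mul_nonneg (mul_nonneg (Real.rpow_nonneg (jb_pos _).le _)
          (Real.rpow_nonneg (jb_pos _).le _)) (Real.rpow_nonneg (jb_pos _).le _))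
          (Real.rpow_nonneg (abs_nonneg _) _)
    · exact le_refl 0
  have hfs : Summable (fun p : ℤ × ℤ =>
      if 0 < |p.2| ∧ |p.2| ≤ |p.1| ∧ 2 * |n| ≤ |p.1| ∧
            (|n| : ℝ) ^ (2 - 2 * α) ≤ (|p.1 * p.2| : ℝ) then
          jb n ^ (2 * s) * (|p.1| : ℝ) ^ (2 * (1 - α)) /
            (jb (n + p.2) ^ (2 * s) * jb (n + p.1 + p.2) ^ (2 * s) * jb (n + p.1) ^ (2 * s)
              * (|p.1 * p.2| : ℝ) ^ (1 - ε))
        else 0) := Summable.of_nonneg_of_le hf0 key hG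
  refine le_trans (Summable.tsum_le_tsum key hfs hG) (le_of_eq ?_)
  -- compute the tsum of the majorant
  have hGeq : ∀ p : ℤ × ℤ, G p = 1024 *
      ((|(p.1:ℝ)| ^ (-(4*s+2*α-1-3*ε)) * |(p.2:ℝ)| ^ (-(1+ε))
        + |(p.1:ℝ)| ^ (-(4*s+2*α-1-3*ε)) * jb (n + p.2) ^ (-(1+ε)))
        + |(p.1:ℝ)| ^ (-(4*s+2*α-1-3*ε)) * jb (n + p.1 + p.2) ^ (-(1+ε))) := by
    intro p; rw [hGdef]; ring
  rw [tsum_congr hGeq, tsum_mul_left, Summable.tsum_add (hg1.add hg2) hg3, Summable.tsum_add hg1 hg2]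
  have T1 : ∑' (p : ℤ × ℤ), |(p.1:ℝ)| ^ (-(4*s+2*α-1-3*ε)) * |(p.2:ℝ)| ^ (-(1+ε))
      = (∑' i : ℤ, |(i:ℝ)| ^ (-(4*s+2*α-1-3*ε))) * (∑' i : ℤ, |(i:ℝ)| ^ (-(1+ε))) := by
    have h := Summable.tsum_prod' (f := fun p : ℤ × ℤ =>
      |(p.1:ℝ)| ^ (-(4*s+2*α-1-3*ε)) * |(p.2:ℝ)| ^ (-(1+ε))) hg1
      (fun b => hv.mul_left (|(b:ℝ)| ^ (-(4*s+2*α-1-3*ε))))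
    rw [h]
    simp_rw [tsum_mul_left]
    rw [tsum_mul_right]
  have T2 : ∑' (p : ℤ × ℤ), |(p.1:ℝ)| ^ (-(4*s+2*α-1-3*ε)) * jb (n + p.2) ^ (-(1+ε))
      = (∑' i : ℤ, |(i:ℝ)| ^ (-(4*s+2*α-1-3*ε))) * (∑' i : ℤ, jb i ^ (-(1+ε))) := by
    have h := Summable.tsum_prod' (f := fun p : ℤ × ℤ =>
      |(p.1:ℝ)| ^ (-(4*s+2*α-1-3*ε)) * jb (n + p.2) ^ (-(1+ε))) hg2
      (fun b => hw'.mul_left (|(b:ℝ)| ^ (-(4*s+2*α-1-3*ε))))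
    rw [h]
    simp_rw [tsum_mul_left]
    rw [tsum_mul_right]
    congr 1
    exact (shiftE n).tsum_eq (fun i : ℤ => jb i ^ (-(1+ε)))
  have T3 : ∑' (p : ℤ × ℤ), |(p.1:ℝ)| ^ (-(4*s+2*α-1-3*ε)) * jb (n + p.1 + p.2) ^ (-(1+ε))
      = (∑' i : ℤ, |(i:ℝ)| ^ (-(4*s+2*α-1-3*ε))) * (∑' i : ℤ, jb i ^ (-(1+ε))) := by
    have h0 : (∑' (p : ℤ × ℤ), |(p.1:ℝ)| ^ (-(4*s+2*α-1-3*ε)) * jb (n + p.1 + p.2) ^ (-(1+ε)))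
        = ∑' (p : ℤ × ℤ), |(p.1:ℝ)| ^ (-(4*s+2*α-1-3*ε)) * jb p.2 ^ (-(1+ε)) := by
      rw [← (shearE n).tsum_eq
        (fun p : ℤ × ℤ => |(p.1:ℝ)| ^ (-(4*s+2*α-1-3*ε)) * jb p.2 ^ (-(1+ε)))]
      exact tsum_congr (fun p => rfl)
    have h := Summable.tsum_prod' (f := fun p : ℤ × ℤ =>
      |(p.1:ℝ)| ^ (-(4*s+2*α-1-3*ε)) * jb p.2 ^ (-(1+ε))) hF
      (fun b => hw.mul_left (|(b:ℝ)| ^ (-(4*s+2*α-1-3*ε))))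
    rw [h0, h]
    simp_rw [tsum_mul_left]
    rw [tsum_mul_right]
  rw [T1, T2, T3]
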